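/- Fix an integer n > 2 and u ∈ [0,1]^n. Then the map v ↦ f(u,v) − v is strictly increasing on the interval [v₀(u), +∞). -/
import Mathlib


open Finset
open scoped Classical

/-- `δ_i(u,v) = v + (4(n−1)/n²)(1 − 2u_i)`. -/
noncomputable def deltaFP (n : ℕ) (u : Fin n → ℝ) (v : ℝ) (i : Fin n) : ℝ :=
  v + 4 * ((n : ℝ) - 1) / (n : ℝ) ^ 2 * (1 - 2 * u i)

/-- `v₀(u) = max( (4(n−1)/n²)·max_i(2u_i − 1), 0 )`. -/
noncomputable def v0FP (n : ℕ) (u : Fin n → ℝ) : ℝ :=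
  max (4 * ((n : ℝ) - 1) / (n : ℝ) ^ 2 * (⨆ i, (2 * u i - 1))) 0

/-- `f(u,v) = ( (1/(n−2)) Σ_i √(δ_i(u,v)) )²`. -/
noncomputable def fFP (n : ℕ) (u : Fin n → ℝ) (v : ℝ) : ℝ :=
  ((1 / ((n : ℝ) - 2)) * ∑ i, Real.sqrt (deltaFP n u v i)) ^ 2

/-- `g_i(u,v) = 1/2 + (n/4)(√(δ_i(u,v)) − √v)`. -/
noncomputable def gFP (n : ℕ) (u : Fin n → ℝ) (v : ℝ) (i : Fin n) : ℝ :=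
  1 / 2 + (n : ℝ) / 4 * (Real.sqrt (deltaFP n u v i) - Real.sqrt v)

/-- `v₁(u) = (2/n) Σ_i (2u_i − 1)`. -/
noncomputable def v1FP (n : ℕ) (u : Fin n → ℝ) : ℝ :=
  (2 / (n : ℝ)) * ∑ i, (2 * u i - 1)

/-- for `u ∈ [0,1]^n`, the map `v ↦ f(u,v) − v` is strictly increasing
on `[v₀(u), +∞)`. -/
theorem fixed_point_map_strictMonoOn
    (n : ℕ) (hn : 2 < n) (u : Fin n → ℝ) (hu : ∀ i, u i ∈ Set.Icc (0 : ℝ) 1) :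
    StrictMonoOn (fun v => fFP n u v - v) (Set.Ici (v0FP n u)) := by
  intro a ha b hb hab
  simp only [Set.mem_Ici] at ha hb
  have hnR : (2:ℝ) < (n:ℝ) := by exact_mod_cast hn
  have hc : (0:ℝ) < (n:ℝ) - 2 := by linarith
  have hcoeff : 0 ≤ 4 * ((n : ℝ) - 1) / (n : ℝ) ^ 2 :=
    div_nonneg (by linarith) (by positivity)
  have hδa : ∀ i, 0 ≤ deltaFP n u a i := by
    intro i
    have h1 : 2 * u i - 1 ≤ ⨆ j, (2 * u j - 1) :=
      le_ciSup (f := fun j => 2 * u j - 1)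
        (Set.Finite.bddAbove (Set.finite_range _)) i
    have h2 : 4 * ((n : ℝ) - 1) / (n : ℝ) ^ 2 * (2 * u i - 1) ≤ v0FP n u :=
      le_trans (mul_le_mul_of_nonneg_left h1 hcoeff) (le_max_left _ _)
    have h3 := le_trans h2 ha
    unfold deltaFP
    nlinarith
  have hδb : ∀ i, 0 < deltaFP n u b i := by
    intro i
    have := hδa i
    unfold deltaFP at this ⊢
    linarith
  set x : Fin n → ℝ := fun i => Real.sqrt (deltaFP n u b i) + Real.sqrt (deltaFP n u a i) with hxdef
  have hx : ∀ i, 0 < x i := fun i =>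
    add_pos_of_pos_of_nonneg (Real.sqrt_pos.mpr (hδb i)) (Real.sqrt_nonneg _)
  have hdiff : ∀ i, Real.sqrt (deltaFP n u b i) - Real.sqrt (deltaFP n u a i)
      = (b - a) * (1 / x i) := by
    intro i
    rw [eq_comm, mul_one_div, div_eq_iff (hx i).ne']
    have h1 : Real.sqrt (deltaFP n u b i) ^ 2 = deltaFP n u b i := Real.sq_sqrt (hδb i).le
    have h2 : Real.sqrt (deltaFP n u a i) ^ 2 = deltaFP n u a i := Real.sq_sqrt (hδa i)
    have h3 : deltaFP n u b i - deltaFP n u a i = b - a := by unfold deltaFP; ring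
    simp only [hxdef]
    nlinarith
  -- sums
  set Sb := ∑ i, Real.sqrt (deltaFP n u b i) with hSb
  set Sa := ∑ i, Real.sqrt (deltaFP n u a i) with hSa
  set X := ∑ i, x i with hX
  set T := ∑ i, (1 / x i) with hT
  have hsum1 : Sb - Sa = (b - a) * T := by
    rw [hSb, hSa, hT, ← Finset.sum_sub_distrib, Finset.mul_sum]
    exact Finset.sum_congr rfl fun i _ => hdiff i
  have hsum2 : Sb + Sa = X := by
    rw [hSb, hSa, hX, ← Finset.sum_add_distrib]
  -- Cauchy-Schwarz : n^2 ≤ X * T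
  have hCS : ((n:ℝ))^2 ≤ X * T := by
    have := Finset.sum_mul_sq_le_sq_mul_sq Finset.univ
      (fun i => Real.sqrt (x i)) (fun i => 1 / Real.sqrt (x i))
    have e1 : ∀ i ∈ Finset.univ, Real.sqrt (x i) * (1 / Real.sqrt (x i)) = (1:ℝ) := by
      intro i _
      rw [mul_one_div, div_self (Real.sqrt_ne_zero'.mpr (hx i))]
    have e2 : ∀ i ∈ Finset.univ, Real.sqrt (x i) ^ 2 = x i := fun i _ =>
      Real.sq_sqrt (hx i).le
    have e3 : ∀ i ∈ Finset.univ, (1 / Real.sqrt (x i)) ^ 2 = 1 / x i := by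
      intro i _
      rw [div_pow, one_pow, Real.sq_sqrt (hx i).le]
    rw [Finset.sum_congr rfl e1, Finset.sum_congr rfl e2, Finset.sum_congr rfl e3] at this
    simpa [hX, hT, one_div] using this
  have hXpos : 0 < X := Finset.sum_pos (fun i _ => hx i) ⟨⟨0, by omega⟩, Finset.mem_univ _⟩
  have hTpos : 0 < T := Finset.sum_pos (fun i _ => one_div_pos.mpr (hx i)) ⟨⟨0, by omega⟩, Finset.mem_univ _⟩
  -- conclude
  have key : Sb ^ 2 - Sa ^ 2 = (b - a) * T * X := by
    have h : Sb ^ 2 - Sa ^ 2 = (Sb - Sa) * (Sb + Sa) := by ring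
    rw [h, hsum1, hsum2]
  have e : ((1/((n:ℝ)-2)) * Sb)^2 - ((1/((n:ℝ)-2)) * Sa)^2
      = (Sb^2 - Sa^2) / ((n:ℝ)-2)^2 := by
    field_simp
  have hgt : b - a < (Sb^2 - Sa^2) / ((n:ℝ)-2)^2 := by
    rw [key, lt_div_iff₀ (by positivity)]
    have h1 : (b - a) * ((n:ℝ))^2 ≤ (b - a) * (X * T) :=
      mul_le_mul_of_nonneg_left hCS (by linarith)
    nlinarith
  simp only [fFP, ← hSb, ← hSa]
  linarith [e, hgt]
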